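/- Let p > 5 and γ > 0, let ξ₃ ∈ (0,1) be the unique solution of ((p−5)/2)·∫_ξ^1 (1−s²)^{2/(p−1)} ds = ξ·(1−ξ²)^{2/(p−1)} in (0,1), and let ω > 4/γ². Set y₀ = (2/((p−1)√ω))·arctanh(2/(γ√ω)) and define φ : ℝ∖{0} → ℝ by φ(x) = sign(x)·(((p+1)ω/2)·sech²(((p−1)√ω/2)·(|x|+y₀)))^{1/(p−1)}. Then the inequality (1/γ)·(φ(0+) − φ(0−))² ≤ ((p−5)(p−1)/(2(p+1)))·∫_{ℝ} |φ(x)|^{p+1} dx holds if and only if ω ≥ 4/(γ²ξ₃²). -/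

import Mathlib

open MeasureTheory Real Set Filter Topology

noncomputable def arctanh (x : ℝ) : ℝ := Real.log ((1 + x) / (1 - x)) / 2

/-!
Off the origin `|φ x| = ψ |x|`, where `ψ` is the soliton `sech` profile shifted by `y₀`. So
`φ(0±) = ±ψ 0` and `∫ |φ|^(p+1) = 2 ∫₀^∞ ψ^(p+1)`. The substitution `s = tanh (α (x + y₀))`,
`α = (p-1)√ω/2`, maps `(0, ∞)` onto `(ξ, 1)`, where `ξ = tanh (α y₀) = 2/(γ√ω)`, and it turns
`sech^(2(p+1)/(p-1))` into `(1 - s²)^(2/(p-1)) / α`. Then the right-hand side of the inequality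
minus its left-hand side is a positive multiple of `f ξ`. The function `f` is continuous, positive
at `0` and negative near `1`, and `ξ₃` is its only zero in `(0, 1)`. Hence `f ξ ≥ 0` iff
`ξ ≤ ξ₃`, that is, iff `ω ≥ 4/(γ²ξ₃²)`.
-/

lemma arctanh_eq_artanh {x : ℝ} (hx : x ∈ Icc (-1) 1) : arctanh x = artanh x := by
  rw [arctanh, artanh_eq_half_log hx]
  ring

namespace Real

lemma hasDerivAt_tanh (x : ℝ) : HasDerivAt tanh ((cosh x)⁻¹ ^ 2) x := by
  have h := (hasDerivAt_sinh x).div (hasDerivAt_cosh x) (cosh_pos x).ne'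
  rw [show sinh / cosh = tanh from funext fun y => (tanh_eq_sinh_div_cosh y).symm] at h
  refine h.congr_deriv ?_
  rw [inv_pow, ← one_div, ← cosh_sq_sub_sinh_sq x]
  ring

lemma strictMono_tanh : StrictMono tanh :=
  strictMono_of_deriv_pos fun x => by
    rw [(hasDerivAt_tanh x).deriv]
    positivity

lemma one_sub_tanh_sq (x : ℝ) : 1 - tanh x ^ 2 = (cosh x)⁻¹ ^ 2 := by
  rw [tanh_eq_sinh_div_cosh]
  field_simp
  linarith [cosh_sq_sub_sinh_sq x]

lemma image_tanh_Ioi (c : ℝ) : tanh '' Ioi c = Ioo (tanh c) 1 := by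
  ext t
  constructor
  · rintro ⟨x, hx, rfl⟩
    exact ⟨strictMono_tanh hx, tanh_lt_one x⟩
  · rintro ⟨hct, ht1⟩
    have ht : t ∈ Ioo (-1) 1 := ⟨(neg_one_lt_tanh c).trans hct, ht1⟩
    refine ⟨artanh t, ?_, tanh_artanh ht⟩
    rwa [mem_Ioi, ← strictMono_tanh.lt_iff_lt, tanh_artanh ht]

end Real

lemma integral_Ioi_sech_sq_rpow {α : ℝ} (hα : 0 < α) (y₀ a : ℝ) :
    ∫ x in Ioi 0, ((cosh (α * (x + y₀)))⁻¹ ^ 2) ^ (1 + a)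
      = (∫ s in tanh (α * y₀)..1, (1 - s ^ 2) ^ a) / α := by
  set f : ℝ → ℝ := fun x => tanh (α * (x + y₀))
  have hf : StrictMono f := strictMono_tanh.comp fun x y (hxy : x < y) =>
    (by gcongr : α * (x + y₀) < α * (y + y₀))
  have hf' : ∀ x ∈ Ioi (0 : ℝ),
      HasDerivWithinAt f ((cosh (α * (x + y₀)))⁻¹ ^ 2 * α) (Ioi 0) x := fun x _ =>
    ((hasDerivAt_tanh _).comp x (((hasDerivAt_id x).add_const y₀).const_mul α
      |>.congr_deriv (mul_one α))).hasDerivWithinAt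
  have himage : f '' Ioi 0 = Ioo (tanh (α * y₀)) 1 := by
    have : (fun x => α * (x + y₀)) '' Ioi 0 = Ioi (α * y₀) := by
      rw [← image_image (α * ·) (· + y₀), image_add_const_Ioi, zero_add,
        image_mul_left_Ioi hα]
    rw [← image_tanh_Ioi, ← this, image_image]
  rw [intervalIntegral.integral_of_le (tanh_lt_one _).le, integral_Ioc_eq_integral_Ioo,
    ← himage, integral_image_eq_integral_abs_deriv_smul measurableSet_Ioi hf' hf.injective.injOn,
    eq_div_iff hα.ne', ← integral_mul_const]
  refine setIntegral_congr_fun measurableSet_Ioi fun x _ => ?_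
  have hsech : 0 < (cosh (α * (x + y₀)))⁻¹ ^ 2 := by positivity
  rw [smul_eq_mul, abs_of_pos (by positivity), one_sub_tanh_sq, rpow_add hsech, rpow_one]
  ring

section OddExtension

variable {φ F : ℝ → ℝ}

lemma tendsto_nhdsGT_of_eq_sign_mul_abs (hF : ContinuousAt F 0)
    (hφ : ∀ x ≠ 0, φ x = sign x * F |x|) : Tendsto φ (𝓝[>] 0) (𝓝 (F 0)) := by
  refine hF.continuousWithinAt.tendsto.congr' ?_
  filter_upwards [self_mem_nhdsWithin] with x (hx : 0 < x)
  rw [hφ x hx.ne', sign_of_pos hx, abs_of_pos hx, one_mul]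

lemma tendsto_nhdsLT_of_eq_sign_mul_abs (hF : ContinuousAt F 0)
    (hφ : ∀ x ≠ 0, φ x = sign x * F |x|) : Tendsto φ (𝓝[<] 0) (𝓝 (-F 0)) := by
  have hFneg : Tendsto (fun x => F (-x)) (𝓝 0) (𝓝 (F 0)) :=
    hF.tendsto.comp (by simpa using (continuous_neg (G := ℝ)).tendsto 0)
  refine (hFneg.neg.mono_left nhdsWithin_le_nhds).congr' ?_
  filter_upwards [self_mem_nhdsWithin] with x (hx : x < 0)
  rw [hφ x hx.ne, sign_of_neg hx, abs_of_neg hx, neg_one_mul]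

lemma integral_abs_rpow_of_eq_sign_mul_abs (hφ : ∀ x ≠ 0, φ x = sign x * F |x|) (r : ℝ) :
    ∫ x, |φ x| ^ r = 2 * ∫ x in Ioi 0, |F x| ^ r := by
  rw [← integral_comp_abs (f := fun y => |F y| ^ r)]
  refine integral_congr_ae ?_
  filter_upwards [compl_mem_ae_iff.2 (measure_singleton (0 : ℝ))] with x (hx : x ≠ 0)
  rcases sign_apply_eq_of_ne_zero x hx with h | h <;> simp [hφ x hx, h]

end OddExtension

noncomputable def solitonProfile (p ω y₀ y : ℝ) : ℝ :=
  ((p + 1) * ω / 2 * (1 / cosh ((p - 1) * √ω / 2 * (y + y₀))) ^ 2) ^ (1 / (p - 1))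

section solitonProfile

variable {p ω : ℝ} (y₀ : ℝ)

lemma continuous_solitonProfile (hp : 1 ≤ p) : Continuous (solitonProfile p ω y₀) :=
  (continuous_const.mul ((continuous_const.div (by fun_prop) fun _ => (cosh_pos _).ne').pow 2)
    ).rpow_const fun _ => Or.inr (one_div_nonneg.2 (sub_nonneg.2 hp))

lemma solitonProfile_zero_sq (hp : 1 < p) (hω : 0 ≤ ω) :
    solitonProfile p ω y₀ 0 ^ 2
      = ((p + 1) * ω / 2 * (1 - tanh ((p - 1) * √ω / 2 * y₀) ^ 2)) ^ (2 / (p - 1)) := by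
  have hbase : 0 ≤ (p + 1) * ω / 2 * (1 - tanh ((p - 1) * √ω / 2 * y₀) ^ 2) := by
    have := tanh_sq_lt_one ((p - 1) * √ω / 2 * y₀)
    have : 0 ≤ p + 1 := by linarith
    positivity
  rw [one_sub_tanh_sq] at hbase ⊢
  rw [solitonProfile, zero_add, one_div (cosh _), ← rpow_natCast, ← rpow_mul hbase]
  congr 1
  push_cast
  ring

lemma abs_solitonProfile_rpow (hp : 1 < p) (hω : 0 ≤ ω) (y : ℝ) :
    |solitonProfile p ω y₀ y| ^ (p + 1) = ((p + 1) * ω / 2) ^ (1 + 2 / (p - 1))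
      * ((cosh ((p - 1) * √ω / 2 * (y + y₀)))⁻¹ ^ 2) ^ (1 + 2 / (p - 1)) := by
  have hC : 0 ≤ (p + 1) * ω / 2 := by
    have : 0 ≤ p + 1 := by linarith
    positivity
  have hsech : 0 ≤ (cosh ((p - 1) * √ω / 2 * (y + y₀)))⁻¹ ^ 2 := by positivity
  have hexp : 1 / (p - 1) * (p + 1) = 1 + 2 / (p - 1) := by
    field_simp [(sub_pos.2 hp).ne']
    ring
  rw [solitonProfile, one_div (cosh _), abs_of_nonneg (by positivity),
    ← rpow_mul (by positivity), hexp, mul_rpow hC hsech]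

lemma integral_solitonProfile_rpow (hp : 1 < p) (hω : 0 < ω) :
    ∫ y in Ioi 0, |solitonProfile p ω y₀ y| ^ (p + 1) = ((p + 1) * ω / 2) ^ (1 + 2 / (p - 1))
      * (∫ s in tanh ((p - 1) * √ω / 2 * y₀)..1, (1 - s ^ 2) ^ (2 / (p - 1)))
      / ((p - 1) * √ω / 2) := by
  have hα : 0 < (p - 1) * √ω / 2 := by
    have := sub_pos.2 hp
    have := sqrt_pos.2 hω
    positivity
  simp_rw [abs_solitonProfile_rpow y₀ hp hω.le]
  rw [integral_const_mul, integral_Ioi_sech_sq_rpow hα, ← mul_div_assoc]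

end solitonProfile

lemma nonneg_iff_le_of_unique_zero {g : ℝ → ℝ} {a b c x : ℝ} (hg : Continuous g)
    (hga : 0 < g a) (hneg : ∃ η ∈ Ioo c b, g η < 0) (hc : c ∈ Ioo a b) (hgc : g c = 0)
    (huniq : ∀ z ∈ Ioo a b, g z = 0 → z = c) (hx : x ∈ Ioo a b) :
    0 ≤ g x ↔ x ≤ c := by
  constructor
  · intro hgx
    by_contra! hcx
    obtain ⟨η, hη, hgη⟩ := hneg
    obtain ⟨z, hz, hgz⟩ := intermediate_value_uIcc hg.continuousOn
      (show (0 : ℝ) ∈ uIcc (g x) (g η) from mem_uIcc.2 (Or.inr ⟨hgη.le, hgx⟩))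
    have hzc : z ∈ Ioo c b := ordConnected_Ioo.uIcc_subset ⟨hcx, hx.2⟩ hη hz
    exact hzc.1.ne' (huniq z ⟨hc.1.trans hzc.1, hzc.2⟩ hgz)
  · intro hxc
    rcases hxc.eq_or_lt with rfl | hxc
    · exact hgc.ge
    by_contra! hgx
    obtain ⟨z, hz, hgz⟩ := intermediate_value_uIcc hg.continuousOn
      (show (0 : ℝ) ∈ uIcc (g a) (g x) from mem_uIcc.2 (Or.inr ⟨hgx.le, hga.le⟩))
    rw [uIcc_of_le hx.1.le] at hz
    have hza : z ≠ a := by rintro rfl; exact hga.ne' hgz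
    have := huniq z ⟨lt_of_le_of_ne hz.1 hza.symm, hz.2.trans_lt hx.2⟩ hgz
    linarith [hz.2]

/-- The paper's `f` is `profileCriterion ((p - 5) / 2) (2 / (p - 1))`. -/
noncomputable def profileCriterion (κ a ξ : ℝ) : ℝ :=
  κ * (∫ s in ξ..1, (1 - s ^ 2) ^ a) - ξ * (1 - ξ ^ 2) ^ a

section profileCriterion

variable {κ a : ℝ}

lemma continuous_one_sub_sq_rpow (ha : 0 ≤ a) : Continuous fun s : ℝ => (1 - s ^ 2) ^ a :=
  (continuous_const.sub (continuous_pow 2)).rpow_const fun _ => Or.inr ha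

lemma continuous_profileCriterion (ha : 0 ≤ a) : Continuous (profileCriterion κ a) := by
  have hw := continuous_one_sub_sq_rpow ha
  have hprim : Continuous fun ξ => ∫ s in ξ..1, (1 - s ^ 2) ^ a := by
    simp_rw [intervalIntegral.integral_symm 1]
    exact (intervalIntegral.continuous_primitive (fun u v => hw.intervalIntegrable u v) 1).neg
  exact (continuous_const.mul hprim).sub (continuous_id.mul hw)

lemma profileCriterion_zero_pos (hκ : 0 < κ) (ha : 0 ≤ a) : 0 < profileCriterion κ a 0 := by
  have hw : ∀ s ∈ Ioo (0 : ℝ) 1, 0 < (1 - s ^ 2) ^ a := fun s hs =>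
    rpow_pos_of_pos (by nlinarith [hs.1, hs.2]) a
  have : 0 < ∫ s in (0 : ℝ)..1, (1 - s ^ 2) ^ a :=
    intervalIntegral.intervalIntegral_pos_of_pos_on
      ((continuous_one_sub_sq_rpow ha).intervalIntegrable 0 1) hw one_pos
  simp only [profileCriterion, zero_mul, sub_zero]
  positivity

lemma exists_profileCriterion_neg (hκ : 0 ≤ κ) (ha : 0 ≤ a) {c : ℝ} (hc : c < 1) :
    ∃ η ∈ Ioo c 1, profileCriterion κ a η < 0 := by
  have hκ1 : 0 < κ + 1 := by linarith
  have hm : κ / (κ + 1) < 1 := (div_lt_one hκ1).2 (by linarith)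
  obtain ⟨η, hcη, hκη, hη1⟩ : ∃ η, c < η ∧ κ / (κ + 1) < η ∧ η < 1 :=
    ⟨(max c (κ / (κ + 1)) + 1) / 2, by linarith [le_max_left c (κ / (κ + 1))],
      by linarith [le_max_right c (κ / (κ + 1))], by linarith [max_lt hc hm]⟩
  refine ⟨η, ⟨hcη, hη1⟩, ?_⟩
  have hη0 : 0 < η := (div_nonneg hκ hκ1.le).trans_lt hκη
  rw [div_lt_iff₀ hκ1] at hκη
  have hwη : 0 < (1 - η ^ 2) ^ a := rpow_pos_of_pos (by nlinarith) a
  -- the weight `(1 - s²)^a` is decreasing on `[η, 1]`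
  have hint : ∫ s in η..1, (1 - s ^ 2) ^ a ≤ (1 - η) * (1 - η ^ 2) ^ a := by
    have := intervalIntegral.integral_mono_on hη1.le
      ((continuous_one_sub_sq_rpow ha).intervalIntegrable η 1)
      (intervalIntegrable_const (μ := volume)) fun s hs =>
        rpow_le_rpow (by nlinarith [hs.1, hs.2] : (0 : ℝ) ≤ 1 - s ^ 2)
          (by nlinarith [hs.1] : 1 - s ^ 2 ≤ 1 - η ^ 2) ha
    simpa using this
  calc profileCriterion κ a η ≤ (κ * (1 - η) - η) * (1 - η ^ 2) ^ a := by
        rw [profileCriterion, sub_mul, mul_assoc]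
        gcongr
    _ < 0 := mul_neg_of_neg_of_pos (by nlinarith) hwη

lemma profileCriterion_nonneg_iff_le {ξ₃ ξ : ℝ} (hκ : 0 < κ) (ha : 0 ≤ a)
    (hξ₃ : ξ₃ ∈ Ioo 0 1) (hzero : profileCriterion κ a ξ₃ = 0)
    (huniq : ∀ ξ ∈ Ioo 0 1, profileCriterion κ a ξ = 0 → ξ = ξ₃) (hξ : ξ ∈ Ioo 0 1) :
    0 ≤ profileCriterion κ a ξ ↔ ξ ≤ ξ₃ :=
  nonneg_iff_le_of_unique_zero (continuous_profileCriterion ha)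
    (profileCriterion_zero_pos hκ ha) (exists_profileCriterion_neg hκ.le ha hξ₃.2)
    hξ₃ hzero huniq hξ

end profileCriterion

lemma two_div_mul_sqrt_le_iff {γ ω c : ℝ} (hγ : 0 < γ) (hω : 0 < ω) (hc : 0 < c) :
    2 / (γ * √ω) ≤ c ↔ 4 / (γ ^ 2 * c ^ 2) ≤ ω := by
  have hsq : (2 / γ / c) ^ 2 = 4 / (γ ^ 2 * c ^ 2) := by ring
  rw [← div_div, div_le_iff₀ (by positivity), ← div_le_iff₀' hc, le_sqrt' (by positivity), hsq]

lemma two_div_mul_sqrt_lt_one {γ ω : ℝ} (hγ : 0 < γ) (hω : 4 / γ ^ 2 < ω) :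
    2 / (γ * √ω) < 1 := by
  have hω0 : 0 < ω := lt_trans (by positivity) hω
  rw [div_lt_one (by positivity), ← div_lt_iff₀' hγ, lt_sqrt (by positivity)]
  ring_nf at hω ⊢
  exact hω

lemma odd_profile_condition_sub_eq {p γ ω y₀ Lp Lm : ℝ} {φ : ℝ → ℝ} (hp : 1 < p) (hγ : 0 < γ)
    (hω : 4 / γ ^ 2 < ω) (hy₀ : y₀ = 2 / ((p - 1) * √ω) * arctanh (2 / (γ * √ω)))
    (hφ : ∀ x ≠ 0, φ x = sign x * solitonProfile p ω y₀ |x|)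
    (hLp : Tendsto φ (𝓝[>] 0) (𝓝 Lp)) (hLm : Tendsto φ (𝓝[<] 0) (𝓝 Lm)) :
    ((p - 5) * (p - 1) / (2 * (p + 1)) * ∫ x, |φ x| ^ (p + 1)) - 1 / γ * (Lp - Lm) ^ 2
      = 2 * √ω * ((p + 1) * ω / 2) ^ (2 / (p - 1))
        * profileCriterion ((p - 5) / 2) (2 / (p - 1)) (2 / (γ * √ω)) := by
  have hω0 : 0 < ω := lt_trans (by positivity) hω
  have hp1 : p - 1 ≠ 0 := (sub_pos.2 hp).ne'
  set ξ := 2 / (γ * √ω) with hξ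
  have hξ1 : ξ ∈ Ioo (-1) 1 :=
    ⟨by linarith [show 0 < ξ by positivity], two_div_mul_sqrt_lt_one hγ hω⟩
  have htanh : tanh ((p - 1) * √ω / 2 * y₀) = ξ := by
    rw [hy₀, arctanh_eq_artanh (Ioo_subset_Icc_self hξ1),
      show (p - 1) * √ω / 2 * (2 / ((p - 1) * √ω) * artanh ξ) = artanh ξ by field_simp,
      tanh_artanh hξ1]
  have hcont := (continuous_solitonProfile y₀ hp.le (ω := ω)).continuousAt (x := 0)
  rw [tendsto_nhds_unique hLp (tendsto_nhdsGT_of_eq_sign_mul_abs hcont hφ),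
    tendsto_nhds_unique hLm (tendsto_nhdsLT_of_eq_sign_mul_abs hcont hφ), sub_neg_eq_add,
    ← two_mul, mul_pow, solitonProfile_zero_sq y₀ hp hω0.le,
    integral_abs_rpow_of_eq_sign_mul_abs hφ, integral_solitonProfile_rpow y₀ hp hω0, htanh,
    profileCriterion]
  have hC : 0 < (p + 1) * ω / 2 := by
    have : 0 < p + 1 := by linarith
    positivity
  have hξsq : 0 ≤ 1 - ξ ^ 2 := by nlinarith [hξ1.1, hξ1.2]
  have hs : 0 < √ω := sqrt_pos.2 hω0
  rw [mul_rpow hC.le hξsq, rpow_add hC, rpow_one]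
  -- what is left is an identity of rational functions of `√ω`, once `ω = √ω ^ 2`
  generalize ((p + 1) * ω / 2) ^ (2 / (p - 1)) = A
  have hωs := (sq_sqrt hω0.le).symm
  rw [hξ]
  generalize √ω = s at hs hωs ⊢
  subst hωs
  field_simp

/-- For the odd profile `φ_{ω,γ}^{odd}` with `p > 5`, the second-derivative condition
`(1/γ)·(φ(0+) − φ(0−))² ≤ ((p−5)(p−1)/(2(p+1)))·∫|φ|^{p+1}` holds iff `ω ≥ 4/(γ²ξ₃²)`,
where `ξ₃` is the unique solution in `(0,1)` of
`((p−5)/2)·∫_ξ^1 (1−s²)^{2/(p−1)} ds = ξ·(1−ξ²)^{2/(p−1)}`. -/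
theorem odd_profile_second_derivative_condition_iff (p γ ω : ℝ) (hp : 5 < p) (hγ : 0 < γ)
    (ξ₃ : ℝ) (hξ₃ : ξ₃ ∈ Set.Ioo (0 : ℝ) 1)
    (hξeq : (p - 5) / 2 * (∫ s in ξ₃..1, (1 - s ^ 2) ^ (2 / (p - 1)))
      = ξ₃ * (1 - ξ₃ ^ 2) ^ (2 / (p - 1)))
    (huniq : ∀ ξ ∈ Set.Ioo (0 : ℝ) 1,
      (p - 5) / 2 * (∫ s in ξ..1, (1 - s ^ 2) ^ (2 / (p - 1)))
        = ξ * (1 - ξ ^ 2) ^ (2 / (p - 1)) → ξ = ξ₃)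
    (hω : 4 / γ ^ 2 < ω)
    (y₀ : ℝ) (hy₀ : y₀ = 2 / ((p - 1) * Real.sqrt ω) * arctanh (2 / (γ * Real.sqrt ω)))
    (φ : ℝ → ℝ)
    (hφ : ∀ x : ℝ, x ≠ 0 → φ x = Real.sign x * ((p + 1) * ω / 2 *
      (1 / Real.cosh ((p - 1) * Real.sqrt ω / 2 * (|x| + y₀))) ^ 2) ^ (1 / (p - 1))) :
    ∀ Lp Lm : ℝ,
      Filter.Tendsto φ (nhdsWithin 0 (Set.Ioi 0)) (nhds Lp) →
      Filter.Tendsto φ (nhdsWithin 0 (Set.Iio 0)) (nhds Lm) →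
      ((1 / γ) * (Lp - Lm) ^ 2
          ≤ (p - 5) * (p - 1) / (2 * (p + 1)) * ∫ x : ℝ, |φ x| ^ (p + 1)
        ↔ 4 / (γ ^ 2 * ξ₃ ^ 2) ≤ ω) := by
  intro Lp Lm hLp hLm
  have hω0 : 0 < ω := lt_trans (by positivity) hω
  have hξ : 2 / (γ * √ω) ∈ Ioo 0 1 := ⟨by positivity, two_div_mul_sqrt_lt_one hγ hω⟩
  have hp1 : 0 < p - 1 := by linarith
  have hC : 0 < (p + 1) * ω / 2 := by
    have : 0 < p + 1 := by linarith
    positivity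
  rw [← sub_nonneg, odd_profile_condition_sub_eq (by linarith) hγ hω hy₀ hφ hLp hLm,
    mul_nonneg_iff_of_pos_left (by positivity),
    profileCriterion_nonneg_iff_le (by linarith) (by positivity) hξ₃ (sub_eq_zero.2 hξeq)
      (fun ξ hξ h => huniq ξ hξ (sub_eq_zero.1 h)) hξ,
    two_div_mul_sqrt_le_iff hγ hω0 hξ₃.1]
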